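/- For n ≥ 7 with n = 6p + d (0 ≤ d ≤ 5), the big height of NI(P_n^2), i.e., the maximal height of a minimal prime of NI(P_n^2), equals 2p if d = 0, 2p+1 if d ∈ {1,2,3}, and 2p+2 if d ∈ {4,5}. -/

import Mathlib

open MvPolynomial CategoryTheory

noncomputable section

/-- The square of the path graph on `n` vertices: vertices indexed by `Fin n`,
with vertex `i` adjacent to vertex `j` iff `1 ≤ |i - j| ≤ 2`. -/
def pathSq (n : ℕ) : SimpleGraph (Fin n) where
  Adj i j := i ≠ j ∧ (i : ℕ) ≤ (j : ℕ) + 2 ∧ (j : ℕ) ≤ (i : ℕ) + 2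
  symm := by refine ⟨?_⟩; intro i j h; exact ⟨h.1.symm, h.2.2, h.2.1⟩
  loopless := by refine ⟨?_⟩; intro i h; exact h.1 rfl

open Classical in
/-- The closed neighborhood `N[i]` of a vertex `i` in `P_n²`, as a finset. -/
def closedNbhd (n : ℕ) (i : Fin n) : Finset (Fin n) :=
  Finset.univ.filter (fun j => j = i ∨ (pathSq n).Adj i j)

/-- The closed neighborhood ideal `NI(P_n²) ⊆ k[x_1,…,x_n]`, generated by the
monomials `∏_{x_j ∈ N[x_i]} x_j` over all vertices `x_i`. -/
def niIdeal (k : Type*) [Field k] (n : ℕ) : Ideal (MvPolynomial (Fin n) k) :=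
  Ideal.span (Set.range fun i : Fin n => ∏ j ∈ closedNbhd n i, X j)

/-- The big height of an ideal: the supremum of the heights of its minimal primes. -/
def bigHeight {R : Type*} [CommRing R] (I : Ideal R) : ℕ∞ :=
  ⨆ p ∈ {p : PrimeSpectrum R | p.asIdeal ∈ I.minimalPrimes}, Order.height p


namespace BH
variable {k : Type*} [Field k] {n : ℕ}


/-- The prime generated by the variables in `C`. -/
def pC (k : Type*) [Field k] {n : ℕ} (C : Finset (Fin n)) : Ideal (MvPolynomial (Fin n) k) :=
  Ideal.span ((fun i => (X i : MvPolynomial (Fin n) k)) '' ↑C)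

def phi (k : Type*) [Field k] {n : ℕ} (C : Finset (Fin n)) :
    MvPolynomial (Fin n) k →ₐ[k] MvPolynomial {i : Fin n // i ∉ C} k :=
  aeval (fun i => if h : i ∈ C then 0 else X ⟨i, h⟩)

def psi (k : Type*) [Field k] {n : ℕ} (C : Finset (Fin n)) :
    MvPolynomial (Fin n) k →ₐ[k] MvPolynomial (Fin n) k :=
  aeval (fun i => if i ∈ C then 0 else X i)

lemma psi_eq_rename_phi (C : Finset (Fin n)) (f : MvPolynomial (Fin n) k) :
    psi k C f = rename Subtype.val (phi k C f) := by
  have : (psi k C : MvPolynomial (Fin n) k →ₐ[k] MvPolynomial (Fin n) k)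
      = (rename Subtype.val).comp (phi k C) := by
    apply algHom_ext
    intro i
    simp only [psi, phi, AlgHom.comp_apply, aeval_X]
    by_cases h : i ∈ C <;> simp [h]
  rw [this]; rfl

lemma sub_psi_mem (C : Finset (Fin n)) (f : MvPolynomial (Fin n) k) :
    f - psi k C f ∈ pC k C := by
  induction f using MvPolynomial.induction_on' with
  | monomial u c =>
    by_cases hA : ∃ i ∈ C, u i ≠ 0
    · obtain ⟨i, hiC, hui⟩ := hA
      have h0 : psi k C (monomial u c) = 0 := by
        rw [psi, aeval_monomial]
        have : (u.prod fun i e => (if i ∈ C then 0 else X i : MvPolynomial (Fin n) k) ^ e) = 0 := by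
          apply Finset.prod_eq_zero (Finsupp.mem_support_iff.2 hui)
          simp [hiC, zero_pow hui]
        rw [this, mul_zero]
      rw [h0, sub_zero]
      obtain ⟨g, hg⟩ : (X i : MvPolynomial (Fin n) k) ∣ monomial u c :=
        X_dvd_monomial.2 (Or.inr hui)
      rw [hg]
      exact Ideal.mul_mem_right _ _ (Ideal.subset_span ⟨i, by simpa using hiC, rfl⟩)
    · push_neg at hA
      have h0 : psi k C (monomial u c) = monomial u c := by
        rw [psi, aeval_monomial]
        have : (u.prod fun i e => (if i ∈ C then 0 else X i : MvPolynomial (Fin n) k) ^ e)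
            = u.prod fun i e => (X i : MvPolynomial (Fin n) k) ^ e := by
          apply Finset.prod_congr rfl
          intro i hi
          have : i ∉ C := fun h => (Finsupp.mem_support_iff.1 hi) (hA i h)
          simp [this]
        rw [this, MvPolynomial.algebraMap_eq, ← monomial_eq]
      rw [h0, sub_self]
      exact (pC k C).zero_mem
  | add p q hp hq =>
    have : p + q - psi k C (p + q) = (p - psi k C p) + (q - psi k C q) := by
      rw [map_add]; ring
    rw [this]
    exact Ideal.add_mem _ hp hq

lemma pC_eq_ker (C : Finset (Fin n)) :
    pC k C = RingHom.ker ((phi k C : MvPolynomial (Fin n) k →ₐ[k] _) :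
      MvPolynomial (Fin n) k →+* MvPolynomial {i : Fin n // i ∉ C} k) := by
  apply le_antisymm
  · rw [pC, Ideal.span_le]
    rintro x ⟨i, hi, rfl⟩
    simp only [SetLike.mem_coe, RingHom.mem_ker, AlgHom.coe_ringHom_mk]
    show phi k C (X i) = 0
    simp only [phi, aeval_X]
    simp [Finset.mem_coe.1 hi]
  · intro f hf
    have hker : phi k C f = 0 := hf
    have := sub_psi_mem (k := k) C f
    rwa [psi_eq_rename_phi, hker, map_zero, sub_zero] at this

instance pC_isPrime (C : Finset (Fin n)) : (pC k C).IsPrime := by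
  rw [pC_eq_ker]
  exact RingHom.ker_isPrime _

lemma X_mem_pC_iff (C : Finset (Fin n)) (i : Fin n) :
    (X i : MvPolynomial (Fin n) k) ∈ pC k C ↔ i ∈ C := by
  constructor
  · intro h
    rw [pC_eq_ker] at h
    by_contra hi
    have : phi k C (X i) = 0 := h
    rw [phi, aeval_X, dif_neg hi] at this
    exact (X_ne_zero _) this
  · intro h
    exact Ideal.subset_span ⟨i, by simpa using h, rfl⟩

lemma pC_le_pC_iff {C D : Finset (Fin n)} : pC k C ≤ pC k D ↔ C ⊆ D := by
  constructor
  · intro h i hi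
    exact (X_mem_pC_iff D i).1 (h ((X_mem_pC_iff C i).2 hi))
  · intro h
    rw [pC, Ideal.span_le]
    rintro x ⟨i, hi, rfl⟩
    exact (X_mem_pC_iff D i).2 (h hi)

lemma prod_X_mem_pC_iff (C : Finset (Fin n)) (s : Finset (Fin n)) :
    (∏ j ∈ s, (X j : MvPolynomial (Fin n) k)) ∈ pC k C ↔ ∃ j ∈ s, j ∈ C := by
  constructor
  · intro h
    have hprime := pC_isPrime (k := k) C
    by_contra hc
    push_neg at hc
    have hnot : ∀ j ∈ s, (X j : MvPolynomial (Fin n) k) ∉ pC k C :=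
      fun j hj hX => hc j hj ((X_mem_pC_iff C j).1 hX)
    exact Finset.prod_induction (fun j => (X j : MvPolynomial (Fin n) k)) (· ∉ pC k C)
      (fun a b ha hb hab => ((pC_isPrime C).mem_or_mem hab).elim ha hb)
      (fun h1 => (pC_isPrime C).ne_top ((Ideal.eq_top_iff_one _).2 h1)) hnot h
  · rintro ⟨j, hj, hjC⟩
    rw [← Finset.prod_erase_mul s _ hj]
    exact Ideal.mul_mem_left _ _ ((X_mem_pC_iff C j).2 hjC)



/-- Factor out the trailing power of X. -/
lemma exists_trailing {R : Type*} [CommRing R] [Nontrivial R] (P : Polynomial R) (hP : P ≠ 0) :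
    ∃ (t : ℕ) (Q : Polynomial R), P = Polynomial.X ^ t * Q ∧ Q.coeff 0 ≠ 0 := by
  suffices H : ∀ d (P : Polynomial R), P ≠ 0 → P.natDegree = d →
      ∃ (t : ℕ) (Q : Polynomial R), P = Polynomial.X ^ t * Q ∧ Q.coeff 0 ≠ 0 from
    H P.natDegree P hP rfl
  intro d
  induction d using Nat.strong_induction_on with
  | _ d ih =>
  intro P hP hd
  by_cases h0 : P.coeff 0 ≠ 0
  · exact ⟨0, P, by simp, h0⟩
  · push_neg at h0
    obtain ⟨P', rfl⟩ := Polynomial.X_dvd_iff.2 h0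
    have hP' : P' ≠ 0 := by rintro rfl; simp at hP
    have hdeg : P'.natDegree < d := by
      have := Polynomial.natDegree_X_mul hP'
      omega
    obtain ⟨t, Q, h1, h2⟩ := ih P'.natDegree hdeg P' hP' rfl
    exact ⟨t + 1, Q, by rw [h1]; ring, h2⟩

/-- The key chain lemma. -/
lemma chain_lemma {A : Type*} [CommRing A] [Algebra k A] {ι : Type*} (g : ι → A) :
    ∀ (L : ℕ) (q : Fin (L + 1) → Ideal A), (∀ i, (q i).IsPrime) →
    (∀ i j : Fin (L + 1), i ≤ j → q i ≤ q j) →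
    ∀ (f : Fin L → A), (∀ i : Fin L, f i ∈ q i.succ) → (∀ i : Fin L, f i ∉ q i.castSucc) →
    (∀ P : MvPolynomial ι k, P ≠ 0 → aeval g P ∉ q (Fin.last L)) →
    ∀ P : MvPolynomial (ι ⊕ Fin L) k, P ≠ 0 → aeval (Sum.elim g f) P ∉ q 0 := by
  intro L
  induction L with
  | zero =>
    intro q hq hmono f hf1 hf2 hg P hP
    let e : (ι ⊕ Fin 0) ≃ ι := Equiv.sumEmpty ι (Fin 0)
    have hfun : Sum.elim g f = g ∘ e := by
      ext x
      cases x with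
      | inl a => simp [e]
      | inr i => exact absurd i.2 (by omega)
    have h1 : aeval (Sum.elim g f) P = aeval g (rename e P) := by
      rw [aeval_rename, hfun]
    rw [h1]
    have h0 : (0 : Fin 1) = Fin.last 0 := rfl
    rw [h0]
    exact hg _ (fun h => hP ((map_eq_zero_iff _ (rename_injective (R := k) e e.injective)).1 h))
  | succ L IH =>
    intro q hq hmono f hf1 hf2 hg P hP
    set τ := ι ⊕ Fin L with hτ
    -- Φ : view P as a polynomial in the variable X (inr 0)
    set Φ : MvPolynomial (ι ⊕ Fin (L + 1)) k →+* Polynomial (MvPolynomial τ k) :=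
      ((aeval (Sum.elim (fun a => Polynomial.C (X (Sum.inl a)))
        (fun i => Fin.cases Polynomial.X (fun j => Polynomial.C (X (Sum.inr j))) i)) :
        MvPolynomial (ι ⊕ Fin (L + 1)) k →ₐ[k] Polynomial (MvPolynomial τ k)) :
        MvPolynomial (ι ⊕ Fin (L + 1)) k →+* Polynomial (MvPolynomial τ k)) with hΦ
    set Ψ : Polynomial (MvPolynomial τ k) →+* MvPolynomial (ι ⊕ Fin (L + 1)) k :=
      Polynomial.eval₂RingHom
        ((aeval (Sum.elim (fun a => X (Sum.inl a)) (fun j => X (Sum.inr j.succ))) :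
          MvPolynomial τ k →ₐ[k] MvPolynomial (ι ⊕ Fin (L + 1)) k) :
          MvPolynomial τ k →+* MvPolynomial (ι ⊕ Fin (L + 1)) k)
        (X (Sum.inr 0)) with hΨ
    have hΨΦ : ∀ Pp : MvPolynomial (ι ⊕ Fin (L + 1)) k, Ψ (Φ Pp) = Pp := by
      have : Ψ.comp Φ = RingHom.id _ := by
        apply ringHom_ext
        · intro r
          simp [hΦ, hΨ]
        · intro o
          cases o with
          | inl a => simp [hΦ, hΨ]
          | inr i =>
            induction i using Fin.cases with
            | zero => simp [hΦ, hΨ]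
            | succ j => simp [hΦ, hΨ]
      exact fun Pp => congrFun (congrArg (fun (F : _ →+* _) => (F : _ → _)) this) Pp
    -- evaluation through Φ
    set w : τ → A := Sum.elim g (fun j : Fin L => f j.succ) with hw
    set κ : MvPolynomial τ k →+* A :=
      ((aeval w : MvPolynomial τ k →ₐ[k] A) : MvPolynomial τ k →+* A) with hκ
    have heval : ∀ Pp : MvPolynomial (ι ⊕ Fin (L + 1)) k,
        aeval (Sum.elim g f) Pp = Polynomial.eval₂ κ (f 0) (Φ Pp) := by
      have : ((aeval (Sum.elim g f) : MvPolynomial (ι ⊕ Fin (L+1)) k →ₐ[k] A) :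
            MvPolynomial (ι ⊕ Fin (L+1)) k →+* A)
          = (Polynomial.eval₂RingHom κ (f 0)).comp Φ := by
        apply ringHom_ext
        · intro r
          simp [hΦ, hκ]
        · intro o
          cases o with
          | inl a => simp [hΦ, hκ, hw]
          | inr i =>
            induction i using Fin.cases with
            | zero => simp [hΦ, hκ]
            | succ j => simp [hΦ, hκ, hw]
      exact fun Pp => congrFun (congrArg (fun (F : _ →+* _) => (F : _ → _)) this) Pp
    intro hmem
    have hΦP : Φ P ≠ 0 := fun h => hP (by rw [← hΨΦ P, h, map_zero])
    obtain ⟨t, Q, hPQ, hQ0⟩ := exists_trailing (Φ P) hΦP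
    have hval : aeval (Sum.elim g f) P = f 0 ^ t * Polynomial.eval₂ κ (f 0) Q := by
      rw [heval, hPQ, Polynomial.eval₂_mul, Polynomial.eval₂_X_pow]
    have hf00 : f 0 ∉ q 0 := by
      have := hf2 0
      rwa [Fin.castSucc_zero] at this
    -- from primality, eval₂ κ (f 0) Q ∈ q 0
    have hQmem : Polynomial.eval₂ κ (f 0) Q ∈ q 0 := by
      rw [hval] at hmem
      rcases (hq 0).mem_or_mem hmem with h | h
      · exact absurd ((hq 0).mem_of_pow_mem t h) hf00
      · exact h
    -- decompose Q = X * Q.divX + C (Q.coeff 0)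
    have hQdecomp : Polynomial.eval₂ κ (f 0) Q
        = f 0 * Polynomial.eval₂ κ (f 0) Q.divX + κ (Q.coeff 0) := by
      conv_lhs => rw [← Polynomial.X_mul_divX_add Q]
      rw [Polynomial.eval₂_add, Polynomial.eval₂_mul, Polynomial.eval₂_X, Polynomial.eval₂_C]
    have hcoeff_mem : κ (Q.coeff 0) ∈ q (Fin.succ 0) := by
      have h1 : Polynomial.eval₂ κ (f 0) Q ∈ q (Fin.succ 0) :=
        hmono 0 (Fin.succ 0) (Fin.zero_le _) hQmem
      have h2 : f 0 * Polynomial.eval₂ κ (f 0) Q.divX ∈ q (Fin.succ 0) :=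
        Ideal.mul_mem_right _ _ (hf1 0)
      have := Ideal.sub_mem _ h1 h2
      rwa [hQdecomp, add_sub_cancel_left] at this
    -- apply IH
    have hcoeff_not : κ (Q.coeff 0) ∉ q (Fin.succ 0) := by
      have := IH (fun i : Fin (L + 1) => q i.succ) (fun i => hq i.succ)
        (fun i j hij => hmono i.succ j.succ (Fin.succ_le_succ_iff.2 hij))
        (fun j : Fin L => f j.succ)
        (fun j => hf1 j.succ)
        (fun j => by show f j.succ ∉ q j.castSucc.succ; rw [Fin.succ_castSucc]; exact hf2 j.succ)
        (fun Pp hPp => by show aeval g Pp ∉ q (Fin.last L).succ; rw [Fin.succ_last]; exact hg Pp hPp)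
        (Q.coeff 0) hQ0
      exact this
    exact hcoeff_not hcoeff_mem


/-- polynomials of total degree < t lie in the span of the "box" monomials -/
lemma mem_span_box (E : ℕ) (f : MvPolynomial (Fin n) k) (hf : f.totalDegree ≤ E) :
    f ∈ Submodule.span k (Set.range fun c : Fin n → Fin (E + 1) =>
      (monomial (Finsupp.equivFunOnFinite.symm fun i => (c i : ℕ)) 1 : MvPolynomial (Fin n) k)) := by
  rw [f.as_sum]
  apply Submodule.sum_mem
  intro u hu
  have hbd : ∀ i, u i ≤ E := by
    intro i
    by_cases h : u i = 0
    · simp [h]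
    · have hi : i ∈ u.support := Finsupp.mem_support_iff.2 h
      have h1 : u i ≤ u.sum fun _ e => e := by
        rw [Finsupp.sum]
        exact Finset.single_le_sum (fun _ _ => Nat.zero_le _) hi
      exact h1.trans ((MvPolynomial.le_totalDegree hu).trans hf)
  have : monomial u (coeff u f) = coeff u f • (monomial u 1 : MvPolynomial (Fin n) k) := by
    rw [smul_monomial, smul_eq_mul, mul_one]
  rw [this]
  apply Submodule.smul_mem
  apply Submodule.subset_span
  refine ⟨fun i => ⟨u i, Nat.lt_succ_of_le (hbd i)⟩, ?_⟩
  congr 1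
  ext i
  simp

lemma card_le_of_algIndep {M : ℕ} (e : Fin M → MvPolynomial (Fin n) k)
    (he : AlgebraicIndependent k e) : M ≤ n := by
  -- degree bound
  set D : ℕ := (Finset.univ.sup fun i => (e i).totalDegree) + 1 with hD
  have hDpos : 1 ≤ D := Nat.le_add_left 1 _
  have hdeg : ∀ i, (e i).totalDegree ≤ D := by
    intro i
    exact Nat.le_succ_of_le (Finset.le_sup (f := fun i => (e i).totalDegree) (Finset.mem_univ i))
  -- main inequality : ∀ t, t ^ M ≤ (D * M * t + 1) ^ n
  have key : ∀ t : ℕ, t ^ M ≤ (D * M * t + 1) ^ n := by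
    intro t
    set E : ℕ := D * M * t with hE
    -- the linearly independent family indexed by (Fin M → Fin t)
    set toF : (Fin M → Fin t) → (Fin M →₀ ℕ) :=
      fun b => Finsupp.equivFunOnFinite.symm fun i => (b i : ℕ) with htoF
    have htoF_inj : Function.Injective toF := by
      intro a b hab
      funext i
      have := congrFun (congrArg (fun (u : Fin M →₀ ℕ) => (u : Fin M → ℕ)) hab) i
      simp only [toF, Finsupp.equivFunOnFinite] at this
      exact Fin.val_injective this
    have hli : LinearIndependent k fun b : Fin M → Fin t =>
        aeval e ((monomial (toF b)) (1 : k)) := by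
      have h1 : LinearIndependent k fun u : Fin M →₀ ℕ =>
          (monomial u 1 : MvPolynomial (Fin M) k) := (basisMonomials (Fin M) k).linearIndependent
      have h2 := h1.map' (aeval e).toLinearMap ?ker
      · exact h2.comp toF htoF_inj
      · rw [LinearMap.ker_eq_bot]
        exact (algebraicIndependent_iff_injective_aeval.1 he :)
    -- values lie in the span of box monomials of degree ≤ E
    set sT : Set (MvPolynomial (Fin n) k) := Set.range fun c : Fin n → Fin (E + 1) =>
      (monomial (Finsupp.equivFunOnFinite.symm fun i => (c i : ℕ)) 1 : MvPolynomial (Fin n) k)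
      with hsT
    have hmem : ∀ b : Fin M → Fin t,
        aeval e ((monomial (toF b)) (1 : k)) ∈ Submodule.span k sT := by
      intro b
      apply mem_span_box
      rw [aeval_monomial]
      calc (algebraMap k _ 1 * (toF b).prod fun i m => e i ^ m).totalDegree
          ≤ (algebraMap k (MvPolynomial (Fin n) k) 1).totalDegree
            + ((toF b).prod fun i m => e i ^ m).totalDegree := totalDegree_mul _ _
        _ ≤ 0 + ((toF b).prod fun i m => e i ^ m).totalDegree := by
            simp [MvPolynomial.algebraMap_eq]
        _ ≤ ((toF b).support.sum fun i => ((e i ^ (toF b i)).totalDegree)) := by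
            rw [zero_add, Finsupp.prod]
            exact totalDegree_finset_prod _ _
        _ ≤ ((toF b).support.sum fun i => D * t) := by
            apply Finset.sum_le_sum
            intro i _
            calc (e i ^ (toF b i)).totalDegree ≤ (toF b i) * (e i).totalDegree :=
                totalDegree_pow _ _
              _ ≤ t * D := by
                  apply Nat.mul_le_mul ?_ (hdeg i)
                  have : (toF b) i = (b i : ℕ) := rfl
                  rw [this]
                  exact le_of_lt (b i).2
              _ = D * t := mul_comm _ _
        _ ≤ M * (D * t) := by
            apply Finset.sum_le_card_nsmul _ _ (D * t) (fun _ _ => le_rfl) |>.trans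
            simp only [smul_eq_mul]
            exact Nat.mul_le_mul_right _ (le_trans (Finset.card_le_univ _) (by simp))
        _ = E := by rw [hE]; ring
    -- conclusion via finrank
    haveI : FiniteDimensional k (Submodule.span k sT) := by
      apply FiniteDimensional.span_of_finite
      exact Set.finite_range _
    set v : (Fin M → Fin t) → Submodule.span k sT :=
      fun b => ⟨aeval e ((monomial (toF b)) (1 : k)), hmem b⟩ with hv
    have hliv : LinearIndependent k v := by
      apply LinearIndependent.of_comp (Submodule.span k sT).subtype
      exact hli
    have hcard := hliv.fintype_card_le_finrank
    have hrank : Module.finrank k (Submodule.span k sT) ≤ (E + 1) ^ n := by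
      classical
      have hT : sT = ((Finset.univ.image fun c : Fin n → Fin (E + 1) =>
          (monomial (Finsupp.equivFunOnFinite.symm fun i => (c i : ℕ)) 1 :
            MvPolynomial (Fin n) k)) : Finset (MvPolynomial (Fin n) k)) := by
        rw [hsT]
        simp [Set.image_univ]
      rw [hT]
      refine le_trans (finrank_span_finset_le_card _) ?_
      refine le_trans Finset.card_image_le ?_
      simp
    calc t ^ M = Fintype.card (Fin M → Fin t) := by simp
      _ ≤ Module.finrank k (Submodule.span k sT) := hcard
      _ ≤ (E + 1) ^ n := hrank
  -- now conclude M ≤ n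
  by_contra hMn
  push_neg at hMn
  set c : ℕ := D * M + 1 with hc
  have hcpos : 1 ≤ c := Nat.le_add_left 1 _
  set t : ℕ := c ^ n + 1 with ht
  have h1 : t ^ M ≤ (D * M * t + 1) ^ n := key t
  have h2 : D * M * t + 1 ≤ c * t := by
    have : 1 ≤ t := Nat.le_add_left 1 _
    calc D * M * t + 1 ≤ D * M * t + t := by omega
      _ = (D * M + 1) * t := by ring
      _ = c * t := rfl
  have h3 : t ^ M ≤ (c * t) ^ n := h1.trans (Nat.pow_le_pow_left h2 n)
  have h4 : t ^ (n + 1) ≤ t ^ M := Nat.pow_le_pow_right (by omega) hMn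
  have h5 : t ^ (n + 1) ≤ c ^ n * t ^ n := by
    rw [mul_pow] at h3
    exact h4.trans h3
  have h6 : t ≤ c ^ n := by
    have htn : 0 < t ^ n := pow_pos (by omega) n
    have h7 : t * t ^ n ≤ c ^ n * t ^ n := by
      calc t * t ^ n = t ^ (n + 1) := by ring
        _ ≤ c ^ n * t ^ n := h5
    exact Nat.le_of_mul_le_mul_right h7 htn
  omega


lemma not_mem_pC (C : Finset (Fin n)) (P : MvPolynomial {i : Fin n // i ∉ C} k) (hP : P ≠ 0) :
    rename Subtype.val P ∉ pC k C := by
  rw [pC_eq_ker]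
  intro h
  have h0 : phi k C (rename Subtype.val P) = 0 := h
  rw [phi, aeval_rename] at h0
  have hfun : ((fun i : Fin n => if h : i ∈ C then (0 : MvPolynomial {i : Fin n // i ∉ C} k)
      else X ⟨i, h⟩) ∘ Subtype.val) = fun i : {i : Fin n // i ∉ C} => X i := by
    funext i
    simp only [Function.comp_apply, dif_neg i.2]
  rw [hfun, aeval_X_left_apply] at h0
  exact hP h0

lemma card_le_of_algIndep' {ι : Type*} [Fintype ι]
    (e : ι → MvPolynomial (Fin n) k) (he : AlgebraicIndependent k e) : Fintype.card ι ≤ n := by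
  let E := (Fintype.equivFin ι).symm
  have h2 : AlgebraicIndependent k (e ∘ E) := he.comp E E.injective
  simpa using card_le_of_algIndep (e ∘ E) h2

variable {n : ℕ}

def IsCover (n : ℕ) (N : Fin n → Finset (Fin n)) (C : Finset (Fin n)) : Prop :=
  ∀ i, ∃ j ∈ N i, j ∈ C

def IsMinCover (n : ℕ) (N : Fin n → Finset (Fin n)) (C : Finset (Fin n)) : Prop :=
  IsCover n N C ∧ ∀ D ⊆ C, IsCover n N D → D = C

lemma mem_closedNbhd {i j : Fin n} :
    j ∈ closedNbhd n i ↔ (i : ℕ) ≤ (j : ℕ) + 2 ∧ (j : ℕ) ≤ (i : ℕ) + 2 := by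
  have hAdj : (pathSq n).Adj i j ↔ (i ≠ j ∧ (i : ℕ) ≤ (j : ℕ) + 2 ∧ (j : ℕ) ≤ (i : ℕ) + 2) :=
    Iff.rfl
  classical
  rw [closedNbhd]
  rw [Finset.mem_filter]
  simp only [Finset.mem_univ, true_and, hAdj]
  constructor
  · rintro (rfl | ⟨_, h1, h2⟩)
    · exact ⟨by omega, by omega⟩
    · exact ⟨h1, h2⟩
  · rintro ⟨h1, h2⟩
    by_cases hij : j = i
    · exact Or.inl hij
    · exact Or.inr ⟨fun h => hij h.symm, h1, h2⟩

/-- Upper bound: a minimal cover has size `m` with `3m ≤ n + 2`. -/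
lemma minCover_card_le (hn : 7 ≤ n) (C : Finset (Fin n))
    (hC : IsMinCover n (closedNbhd n) C) : 3 * C.card ≤ n + 2 := by
  classical
  set m := C.card with hm
  -- sorted enumeration
  have hiso := C.orderIsoOfFin (rfl : C.card = m)
  set c : Fin m → ℕ := fun j => ((C.orderIsoOfFin rfl j : Fin n) : ℕ) with hc
  have hmono : StrictMono c := by
    intro a b hab
    exact_mod_cast (C.orderIsoOfFin rfl).strictMono hab
  have hcn : ∀ j : Fin m, c j < n := fun j => (C.orderIsoOfFin rfl j : Fin n).2
  have hmemC : ∀ j : Fin m, (⟨c j, hcn j⟩ : Fin n) ∈ C := by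
    intro j
    have := (C.orderIsoOfFin rfl j).2
    simpa [hc, Fin.eta] using this
  -- m ≥ 2
  have hm2 : 2 ≤ m := by
    obtain ⟨x, hx1, hx2⟩ := hC.1 ⟨0, by omega⟩
    obtain ⟨y, hy1, hy2⟩ := hC.1 ⟨n - 1, by omega⟩
    rw [mem_closedNbhd] at hx1 hy1
    have hxy : x ≠ y := by
      intro h
      subst h
      simp at hx1 hy1
      omega
    have := Finset.one_lt_card.2 ⟨x, hx2, y, hy2, hxy⟩
    omega
  have hmax : ∀ x ∈ C, (x : ℕ) ≤ c ⟨m - 1, by omega⟩ := by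
    intro x hx
    obtain ⟨j, hj⟩ := (C.orderIsoOfFin rfl).surjective ⟨x, hx⟩
    have hxc : c j = (x : ℕ) := by rw [hc]; simp only; rw [hj]
    have hjle : j ≤ (⟨m - 1, by omega⟩ : Fin m) := by
      rw [Fin.le_def]
      have := j.2
      simp only
      omega
    have := hmono.monotone hjle
    omega
  -- minimality witnesses
  have hwit : ∀ j : Fin m, ∃ i : Fin n,
      ((i : ℕ) ≤ c j + 2 ∧ c j ≤ (i : ℕ) + 2) ∧
      ∀ x ∈ C, (x : ℕ) ≠ c j → ¬((i : ℕ) ≤ (x : ℕ) + 2 ∧ (x : ℕ) ≤ (i : ℕ) + 2) := by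
    intro j
    set xj : Fin n := ⟨c j, (C.orderIsoOfFin rfl j : Fin n).2⟩ with hxj
    have hxjC : xj ∈ C := hmemC j
    have herase : ¬ IsCover n (closedNbhd n) (C.erase xj) := by
      intro hcov
      have heq := hC.2 _ (Finset.erase_subset _ _) hcov
      rw [← heq] at hxjC
      exact (Finset.notMem_erase xj C) hxjC
    rw [IsCover] at herase
    push_neg at herase
    obtain ⟨i, hi⟩ := herase
    refine ⟨i, ?_, ?_⟩
    · obtain ⟨y, hy1, hy2⟩ := hC.1 i
      have : y = xj := by
        by_contra hne
        exact hi y hy1 (Finset.mem_erase.2 ⟨hne, hy2⟩)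
      rw [this] at hy1
      exact mem_closedNbhd.1 hy1
    · intro x hx hne hmem
      have : x ∈ C.erase xj := Finset.mem_erase.2 ⟨by
        intro h; exact hne (by rw [h]), hx⟩
      exact hi x (mem_closedNbhd.2 hmem) this
  -- c 1 ≥ 3
  have hc1 : ∀ (h1 : 1 < m), 3 ≤ c ⟨1, h1⟩ := by
    intro h1
    obtain ⟨i, hi1, hi2⟩ := hwit ⟨0, by omega⟩
    have h01 : c ⟨0, by omega⟩ < c ⟨1, h1⟩ := hmono (by simp [Fin.lt_def])
    have := hi2 ⟨c ⟨1, h1⟩, (C.orderIsoOfFin rfl ⟨1, h1⟩ : Fin n).2⟩ (hmemC ⟨1, h1⟩) (by simp; omega)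
    simp at this
    omega
  -- step: c (j+2) ≥ c j + 6
  have hstep : ∀ (j : ℕ) (h2 : j + 2 < m), c ⟨j, by omega⟩ + 6 ≤ c ⟨j + 2, h2⟩ := by
    intro j h2
    obtain ⟨i, hi1, hi2⟩ := hwit ⟨j + 1, by omega⟩
    have hlt1 : c ⟨j, by omega⟩ < c ⟨j + 1, by omega⟩ := hmono (by simp [Fin.lt_def])
    have hlt2 : c ⟨j + 1, by omega⟩ < c ⟨j + 2, h2⟩ := hmono (by simp [Fin.lt_def])
    have hx := hi2 ⟨c ⟨j, by omega⟩, (C.orderIsoOfFin rfl ⟨j, by omega⟩ : Fin n).2⟩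
      (hmemC ⟨j, by omega⟩) (by simp; omega)
    have hy := hi2 ⟨c ⟨j + 2, h2⟩, (C.orderIsoOfFin rfl ⟨j + 2, h2⟩ : Fin n).2⟩
      (hmemC ⟨j + 2, h2⟩) (by simp; omega)
    simp at hx hy
    omega
  -- induction: c j ≥ 3 j
  have hlow : ∀ (j : ℕ) (hj : j < m), 3 * j ≤ c ⟨j, hj⟩ := by
    intro j
    induction j using Nat.strong_induction_on with
    | _ j ih =>
    intro hj
    match j, hj with
    | 0, hj => omega
    | 1, hj => have := hc1 hj; omega
    | (j + 2), hj =>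
      have h1 := ih j (by omega) (by omega)
      have h2 := hstep j hj
      omega
  -- last element
  have hlast_le : c ⟨m - 1, by omega⟩ ≤ n - 1 := by
    have := hcn ⟨m - 1, by omega⟩
    omega
  have hlast_ge : n - 3 ≤ c ⟨m - 1, by omega⟩ := by
    obtain ⟨y, hy1, hy2⟩ := hC.1 ⟨n - 1, by omega⟩
    rw [mem_closedNbhd] at hy1
    have := hmax y hy2
    simp at hy1
    omega
  have := hlow (m - 1) (by omega)
  omega

/-- Construction of a minimal cover of maximal size. -/
lemma exists_maxMinCover (hn : 7 ≤ n) :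
    ∃ C : Finset (Fin n), IsMinCover n (closedNbhd n) C ∧ 3 * C.card = 3 * ((n + 2) / 3) := by
  classical
  set M := (n + 2) / 3 with hM
  have hM3 : 3 ≤ M := by omega
  have h3M : 3 * M ≤ n + 2 := by omega
  have hMn : n ≤ 3 * M := by omega
  set g : Fin M → Fin n := fun j => ⟨3 * j, by have := j.2; omega⟩ with hg
  have hginj : Function.Injective g := by
    intro a b hab
    have : 3 * (a : ℕ) = 3 * (b : ℕ) := by
      have := congrArg (fun x : Fin n => (x : ℕ)) hab
      simpa [hg] using this
    exact Fin.ext (by omega)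
  set C : Finset (Fin n) := Finset.univ.image g with hC
  have hcard : C.card = M := by
    rw [hC, Finset.card_image_of_injective _ hginj, Finset.card_univ, Fintype.card_fin]
  have hmemC : ∀ x : Fin n, x ∈ C ↔ ∃ j : Fin M, (x : ℕ) = 3 * j := by
    intro x
    rw [hC]
    simp only [Finset.mem_image, Finset.mem_univ, true_and]
    constructor
    · rintro ⟨j, rfl⟩; exact ⟨j, rfl⟩
    · rintro ⟨j, hj⟩; exact ⟨j, Fin.ext hj.symm⟩
  have hcov : IsCover n (closedNbhd n) C := by
    intro i
    set jv : ℕ := min (M - 1) (((i : ℕ) + 2) / 3) with hjv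
    have hjvM : jv < M := by omega
    refine ⟨g ⟨jv, hjvM⟩, ?_, (hmemC _).2 ⟨⟨jv, hjvM⟩, rfl⟩⟩
    rw [mem_closedNbhd]
    have hgi : ((g ⟨jv, hjvM⟩ : Fin n) : ℕ) = 3 * jv := rfl
    rw [hgi]
    have hi2 : (i : ℕ) ≤ n - 1 := by have := i.2; omega
    omega
  refine ⟨C, ⟨hcov, ?_⟩, by omega⟩
  intro D hD hDcov
  apply Finset.Subset.antisymm hD
  intro x hx
  obtain ⟨j, hj⟩ := (hmemC x).1 hx
  -- consider the window at x itself
  obtain ⟨y, hy1, hy2⟩ := hDcov x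
  have hyC : y ∈ C := hD hy2
  obtain ⟨j', hj'⟩ := (hmemC y).1 hyC
  rw [mem_closedNbhd] at hy1
  have : (j' : ℕ) = (j : ℕ) := by omega
  have hxy : y = x := by
    apply Fin.ext
    rw [hj, hj']
    omega
  rwa [hxy] at hy2

section covers
lemma exists_minCover_subset (N : Fin n → Finset (Fin n)) (C : Finset (Fin n))
    (hC : IsCover n N C) : ∃ D ⊆ C, IsMinCover n N D := by
  suffices H : ∀ c (C : Finset (Fin n)), IsCover n N C → C.card = c →
      ∃ D ⊆ C, IsMinCover n N D from H C.card C hC rfl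
  intro c
  induction c using Nat.strong_induction_on with
  | _ c ih =>
  intro C hC hcard
  by_cases hmin : ∀ D ⊆ C, IsCover n N D → D = C
  · exact ⟨C, subset_rfl, hC, hmin⟩
  · push_neg at hmin
    obtain ⟨D, hDC, hDcov, hne⟩ := hmin
    have : D.card < c := hcard ▸ Finset.card_lt_card (lt_of_le_of_ne hDC hne)
    -- note ih signature
    obtain ⟨D', hD'D, hD'⟩ := ih D.card this D hDcov rfl
    exact ⟨D', hD'D.trans hDC, hD'⟩

/-- the generic monomial ideal generated by neighborhood products -/
def genIdeal (k : Type*) [Field k] {n : ℕ} (N : Fin n → Finset (Fin n)) :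
    Ideal (MvPolynomial (Fin n) k) :=
  Ideal.span (Set.range fun i : Fin n => ∏ j ∈ N i, X j)

lemma genIdeal_le_pC_iff (N : Fin n → Finset (Fin n)) (C : Finset (Fin n)) :
    genIdeal k N ≤ pC k C ↔ IsCover n N C := by
  rw [genIdeal, Ideal.span_le]
  constructor
  · intro h i
    exact (prod_X_mem_pC_iff (k := k) C (N i)).1 (h ⟨i, rfl⟩)
  · rintro h x ⟨i, rfl⟩
    exact (prod_X_mem_pC_iff (k := k) C (N i)).2 (h i)

lemma prod_X_mem_prime {p : Ideal (MvPolynomial (Fin n) k)} (hp : p.IsPrime)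
    (s : Finset (Fin n)) (h : (∏ j ∈ s, (X j : MvPolynomial (Fin n) k)) ∈ p) :
    ∃ j ∈ s, (X j : MvPolynomial (Fin n) k) ∈ p := by
  by_contra hc
  push_neg at hc
  exact Finset.prod_induction (fun j => (X j : MvPolynomial (Fin n) k)) (· ∉ p)
    (fun a b ha hb hab => (hp.mem_or_mem hab).elim ha hb)
    (fun h1 => hp.ne_top ((Ideal.eq_top_iff_one _).2 h1)) hc h

/-- minimal primes of the neighborhood ideal are exactly the variable primes of
minimal covers. -/
lemma minimalPrimes_genIdeal (N : Fin n → Finset (Fin n)) (p : Ideal (MvPolynomial (Fin n) k)) :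
    p ∈ (genIdeal k N).minimalPrimes ↔ ∃ C, IsMinCover n N C ∧ p = pC k C := by
  classical
  constructor
  · rintro ⟨⟨hprime, hle⟩, hmin⟩
    set C' : Finset (Fin n) := Finset.univ.filter (fun i => (X i : MvPolynomial (Fin n) k) ∈ p)
      with hC'
    have hC'cov : IsCover n N C' := by
      intro i
      have : (∏ j ∈ N i, (X j : MvPolynomial (Fin n) k)) ∈ p := hle (Ideal.subset_span ⟨i, rfl⟩)
      obtain ⟨j, hj, hXj⟩ := prod_X_mem_prime hprime (N i) this
      exact ⟨j, hj, by simp [hC', hXj]⟩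
    have hpCle : pC k C' ≤ p := by
      rw [pC, Ideal.span_le]
      rintro x ⟨i, hi, rfl⟩
      have := Finset.mem_filter.1 (Finset.mem_coe.1 hi)
      exact this.2
    obtain ⟨D, hDC', hD⟩ := exists_minCover_subset N C' hC'cov
    have hgenD : genIdeal k N ≤ pC k D := (genIdeal_le_pC_iff N D).2 hD.1
    have hDle : pC k D ≤ p := le_trans ((pC_le_pC_iff (k := k)).2 hDC') hpCle
    have : p ≤ pC k D := hmin ⟨pC_isPrime (k := k) D, hgenD⟩ hDle
    exact ⟨D, hD, le_antisymm this hDle⟩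
  · rintro ⟨C, hC, rfl⟩
    haveI := pC_isPrime (k := k) C
    obtain ⟨q, hq, hqle⟩ := Ideal.exists_minimalPrimes_le ((genIdeal_le_pC_iff (k := k) N C).2 hC.1)
    -- q is itself of the form pC D for a minimal cover D, by the forward direction
    obtain ⟨⟨hqprime, hqge⟩, hqmin⟩ := hq
    set C' : Finset (Fin n) := Finset.univ.filter (fun i => (X i : MvPolynomial (Fin n) k) ∈ q)
      with hC'
    have hC'cov : IsCover n N C' := by
      intro i
      have : (∏ j ∈ N i, (X j : MvPolynomial (Fin n) k)) ∈ q := hqge (Ideal.subset_span ⟨i, rfl⟩)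
      obtain ⟨j, hj, hXj⟩ := prod_X_mem_prime hqprime (N i) this
      exact ⟨j, hj, by simp [hC', hXj]⟩
    have hsub : C' ⊆ C := by
      intro i hi
      have hXi : (X i : MvPolynomial (Fin n) k) ∈ q := (Finset.mem_filter.1 hi).2
      exact (X_mem_pC_iff (k := k) C i).1 (hqle hXi)
    have : C' = C := hC.2 C' hsub hC'cov
    have hpCle : pC k C' ≤ q := by
      rw [pC, Ideal.span_le]
      rintro x ⟨i, hi, rfl⟩
      exact (Finset.mem_filter.1 (Finset.mem_coe.1 hi)).2
    have hqeq : q = pC k C := by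
      apply le_antisymm hqle
      rw [← this] at *
      exact hpCle
    rw [← hqeq]
    exact ⟨⟨hqprime, hqge⟩, hqmin⟩
end covers

section height

/-- lower bound: a chain of variable primes -/
lemma exists_ltSeries (C : Finset (Fin n)) :
    ∃ s : LTSeries (PrimeSpectrum (MvPolynomial (Fin n) k)),
      s.length = C.card ∧ s.last = ⟨pC k C, pC_isPrime (k := k) C⟩ := by
  classical
  induction C using Finset.induction_on with
  | empty => exact ⟨RelSeries.singleton _ ⟨pC k ∅, pC_isPrime (k := k) ∅⟩, rfl, rfl⟩
  | @insert a C ha ih =>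
    obtain ⟨s, hlen, hlast⟩ := ih
    have hlt : s.last < (⟨pC k (insert a C), pC_isPrime (k := k) _⟩ : PrimeSpectrum _) := by
      rw [hlast]
      constructor
      · exact (pC_le_pC_iff (k := k)).2 (Finset.subset_insert a C)
      · intro hge
        have : (X a : MvPolynomial (Fin n) k) ∈ pC k C :=
          hge ((X_mem_pC_iff (k := k) (insert a C) a).2 (Finset.mem_insert_self a C))
        exact ha ((X_mem_pC_iff (k := k) C a).1 this)
    refine ⟨s.snoc _ hlt, ?_, ?_⟩
    · simp [hlen, Finset.card_insert_of_notMem ha]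
    · simp [RelSeries.last_snoc]

lemma height_pC (C : Finset (Fin n)) :
    Order.height (⟨pC k C, pC_isPrime (k := k) C⟩ : PrimeSpectrum (MvPolynomial (Fin n) k))
      = (C.card : ℕ∞) := by
  apply le_antisymm
  · rw [Order.height_le_iff]
    intro s hlast
    -- extract the chain of ideals
    by_contra hgt
    push_neg at hgt
    have hL : C.card < s.length := by exact_mod_cast hgt
    set L := s.length with hLdef
    set q : Fin (L + 1) → Ideal (MvPolynomial (Fin n) k) := fun i => (s i).asIdeal with hq
    have hqprime : ∀ i, (q i).IsPrime := fun i => (s i).2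
    have hqmono : ∀ i j : Fin (L + 1), i ≤ j → q i ≤ q j := fun i j hij => s.monotone hij
    have hqlt : ∀ i : Fin L, q i.castSucc < q i.succ := fun i =>
      s.strictMono Fin.castSucc_lt_succ
    have hlastle : q (Fin.last L) ≤ pC k C := hlast
    -- pick elements
    have hpick : ∀ i : Fin L, ∃ x, x ∈ q i.succ ∧ x ∉ q i.castSucc := by
      intro i
      obtain ⟨x, hx1, hx2⟩ := SetLike.exists_of_lt (hqlt i)
      exact ⟨x, hx1, hx2⟩
    choose f hf1 hf2 using hpick
    -- the complement variables
    set g : {i : Fin n // i ∉ C} → MvPolynomial (Fin n) k := fun i => X i.val with hg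
    have hgcond : ∀ P : MvPolynomial {i : Fin n // i ∉ C} k, P ≠ 0 →
        aeval g P ∉ q (Fin.last L) := by
      intro P hP hmem
      have h1 : aeval g P = rename Subtype.val P := by rw [hg, ← aeval_X_left_apply (rename Subtype.val P), aeval_rename]; rfl
      exact not_mem_pC (k := k) C P hP (h1 ▸ hlastle hmem)
    have hindep : AlgebraicIndependent k (Sum.elim g f) := by
      rw [algebraicIndependent_iff]
      intro P hP
      by_contra hPne
      exact chain_lemma g L q hqprime hqmono f hf1 hf2 hgcond P hPne (hP ▸ (q 0).zero_mem)
    have hcard := card_le_of_algIndep' _ hindep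
    rw [Fintype.card_sum, Fintype.card_fin] at hcard
    have hcompl : Fintype.card {i : Fin n // i ∉ C} = n - C.card := by
      simp [Fintype.card_subtype_compl]
    have hCn : C.card ≤ n := by
      have := Finset.card_le_univ C
      simpa using this
    omega
  · obtain ⟨s, hlen, hlast⟩ := exists_ltSeries (k := k) C
    have := Order.length_le_height (le_of_eq hlast)
    rwa [hlen] at this

end height

end BH

/-- For `n ≥ 7` with `n = 6p + d`, `0 ≤ d ≤ 5`, the big height of `NI(P_n²)` is `2p`
if `d = 0`, `2p+1` if `d ∈ {1,2,3}`, and `2p+2` if `d ∈ {4,5}`. -/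
theorem bigHeight_niIdeal_pathSq (k : Type*) [Field k] (n p d : ℕ) (hn : 7 ≤ n)
    (hd : d ≤ 5) (hnpd : n = 6 * p + d) :
    bigHeight (niIdeal k n) =
      ((if d = 0 then 2 * p else if d ≤ 3 then 2 * p + 1 else 2 * p + 2 : ℕ) : ℕ∞) := by
  classical
  have hEq : niIdeal k n = BH.genIdeal k (closedNbhd n) := rfl
  set M : ℕ := (n + 2) / 3 with hM
  have htarget : (if d = 0 then 2 * p else if d ≤ 3 then 2 * p + 1 else 2 * p + 2 : ℕ) = M := by
    split_ifs <;> omega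
  rw [htarget]
  apply le_antisymm
  · rw [bigHeight]
    apply iSup_le
    intro q
    apply iSup_le
    intro hq
    rw [Set.mem_setOf_eq, hEq] at hq
    obtain ⟨C, hC, hCq⟩ := (BH.minimalPrimes_genIdeal (closedNbhd n) q.asIdeal).1 hq
    have hqpt : q = ⟨BH.pC k C, BH.pC_isPrime C⟩ := PrimeSpectrum.ext hCq
    rw [hqpt, BH.height_pC]
    have hcard : C.card ≤ M := by
      have := BH.minCover_card_le hn C hC
      omega
    exact_mod_cast hcard
  · obtain ⟨C, hC, hCcard⟩ := BH.exists_maxMinCover (n := n) hn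
    have hcard : C.card = M := by omega
    set pt : PrimeSpectrum (MvPolynomial (Fin n) k) := ⟨BH.pC k C, BH.pC_isPrime C⟩ with hpt
    have hmem : pt ∈ {q : PrimeSpectrum (MvPolynomial (Fin n) k) |
        q.asIdeal ∈ (niIdeal k n).minimalPrimes} := by
      rw [Set.mem_setOf_eq, hEq]
      exact (BH.minimalPrimes_genIdeal (closedNbhd n) pt.asIdeal).2 ⟨C, hC, rfl⟩
    rw [bigHeight]
    refine le_trans ?_ (le_iSup_of_le pt (le_iSup_of_le hmem le_rfl))
    rw [BH.height_pC, hcard]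

end
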